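/- arXiv:1907.12828 — 5 statements merged into one kernel-verified Lean document; each statement's English description precedes it below -/
import Mathlib

section
/- Let Y be an abelian group and ψ : Y → ℂ a function. If for some elements a₁,…,aₘ with each aⱼ(Y) dense (here take aⱼ to be surjective endomorphisms of Y) the equation ψ(a₁y₁+⋯+aₘyₘ) = Σⱼ rⱼ(y₁,…,y_{j-1},y_{j+1},…,yₘ) holds for all y₁,…,yₘ ∈ Y and some functions rⱼ : Y^{m-1} → ℂ, then the iterated finite difference Δ_{a₁h₁}⋯Δ_{aₘhₘ} applied to y ↦ ψ(a₁y₁+⋯+aₘyₘ) vanishes identically; in particular, when the aⱼ are surjective, Δ_h^m ψ(y) = 0 for all y, h ∈ Y, i.e. ψ is a polynomial of degree at most m−1. -/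
/-- Finite difference operator: `dOp h ψ y = ψ (y + h) - ψ y`. -/
def dOp {G : Type*} [AddCommGroup G] (h : G) (ψ : G → ℂ) : G → ℂ :=
  fun y => ψ (y + h) - ψ y

/-- Iterated finite differences along a list of increments. -/
def dIter {G : Type*} [AddCommGroup G] : List G → (G → ℂ) → (G → ℂ)
  | [], ψ => ψ
  | h :: t, ψ => dOp h (dIter t ψ)

/-!
Lift ψ to `Φ y = ψ (∑ j, a j (y j))` on `Yᵐ`. Differences of ψ along the steps `a j (h j)`
are differences of Φ along the coordinate steps `Pi.single j (h j)`, and every point of `Y`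
has the form `∑ j, a j (y j)` by surjectivity. Since `Φ = ∑ j, r j` and `r j` is invariant
under the `j`-th coordinate step, the mixed difference `Δ_{h₁ e₁} ⋯ Δ_{hₘ eₘ}` kills each `r j`.
Taking all `a j (h j)` equal to a given `h` gives `Δ_h^m ψ = 0`.
-/

section

variable {G H : Type*} [AddCommGroup G] [AddCommGroup H]

theorem dIter_replicate (h : G) (ψ : G → ℂ) (n : ℕ) :
    dIter (List.replicate n h) ψ = (dOp h)^[n] ψ := by
  induction n with
  | zero => rfl
  | succ n ih => rw [List.replicate_succ, Function.iterate_succ_apply', ← ih]; rfl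

theorem dIter_add (l : List G) (f g : G → ℂ) : dIter l (f + g) = dIter l f + dIter l g := by
  induction l with
  | nil => rfl
  | cons h t ih => funext y; simp only [dIter, dOp, ih, Pi.add_apply]; ring

theorem dIter_sum {ι : Type*} (l : List G) (s : Finset ι) (f : ι → G → ℂ) :
    dIter l (∑ i ∈ s, f i) = ∑ i ∈ s, dIter l (f i) :=
  map_sum (AddMonoidHom.mk' (dIter l) (dIter_add l)) f s

theorem dIter_comp_add_right (l : List G) (f : G → ℂ) (h : G) :
    dIter l (fun y => f (y + h)) = fun y => dIter l f (y + h) := by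
  induction l with
  | nil => rfl
  | cons k t ih => funext y; simp only [dIter, dOp, ih, add_right_comm]

theorem dIter_eq_zero_of_mem {l : List G} {f : G → ℂ} {h : G} (hf : ∀ y, f (y + h) = f y)
    (hl : h ∈ l) : dIter l f = 0 := by
  induction l with
  | nil => simp at hl
  | cons k t ih =>
    rcases List.mem_cons.mp hl with rfl | ht
    · funext y
      have := congrFun (dIter_comp_add_right t f h) y
      simp only [hf] at this
      simp [dIter, dOp, ← this]
    · funext y; simp [dIter, dOp, ih ht]

theorem dIter_comp_addMonoidHom (A : G →+ H) (l : List G) (ψ : H → ℂ) :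
    dIter l (ψ ∘ A) = dIter (l.map A) ψ ∘ A := by
  induction l with
  | nil => rfl
  | cons h t ih => funext y; simp [dIter, dOp, ih]

theorem sum_apply_pi_single {ι : Type*} [Fintype ι] [DecidableEq ι] (f : ι → G →+ H) (i : ι)
    (x : G) :
    ∑ j, f j ((Pi.single i x : ι → G) j) = f i x := by
  simp [Pi.single_apply, apply_ite]

theorem dIter_ofFn_single_sum_eq_zero {m : ℕ} (r : Fin m → (Fin m → G) → ℂ)
    (hr : ∀ (j : Fin m) (y y' : Fin m → G), (∀ k, k ≠ j → y k = y' k) → r j y = r j y')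
    (h : Fin m → G) : dIter (List.ofFn fun j => Pi.single j (h j)) (∑ j, r j) = 0 := by
  rw [dIter_sum]
  refine Finset.sum_eq_zero fun j _ => dIter_eq_zero_of_mem (h := Pi.single j (h j)) ?_ ?_
  · exact fun y => hr j _ _ fun k hk => by simp [hk]
  · exact List.mem_ofFn.mpr ⟨j, rfl⟩

end

/-- if `ψ (a₁ y₁ + ⋯ + aₘ yₘ)` splits as a sum of functions each of
which does not depend on one of the variables, and each `aⱼ` is a surjective
endomorphism (so `aⱼ(Y)` is dense), then the iterated difference
`Δ_{a₁h₁} ⋯ Δ_{aₘhₘ} ψ` vanishes, and in particular `Δ_h^m ψ ≡ 0`, i.e. `ψ`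
is a polynomial of degree at most `m - 1`. -/
theorem stmt0 {Y : Type*} [AddCommGroup Y] (m : ℕ) (hm : 1 ≤ m)
    (a : Fin m → Y →+ Y) (ha : ∀ j, Function.Surjective (a j))
    (ψ : Y → ℂ) (r : Fin m → (Fin m → Y) → ℂ)
    (hr : ∀ (j : Fin m) (y y' : Fin m → Y), (∀ k, k ≠ j → y k = y' k) → r j y = r j y')
    (heq : ∀ y : Fin m → Y, ψ (∑ j, a j (y j)) = ∑ j, r j y) :
    (∀ (h : Fin m → Y) (y : Y), dIter (List.ofFn fun j => a j (h j)) ψ y = 0) ∧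
    (∀ y h : Y, (dOp h)^[m] ψ y = 0) := by
  let A : (Fin m → Y) →+ Y := ∑ j, (a j).comp (Pi.evalAddMonoidHom (fun _ => Y) j)
  have hA : ∀ y, A y = ∑ j, a j (y j) := fun y => by simp [A]
  have hA_single : ∀ j x, A (Pi.single j x) = a j x := fun j x => by
    rw [hA, sum_apply_pi_single]
  have hA_surj : Function.Surjective A := fun y => by
    obtain ⟨x, hx⟩ := ha ⟨0, hm⟩ y
    exact ⟨Pi.single _ x, by rw [hA_single, hx]⟩
  have hψA : ψ ∘ A = ∑ j, r j := funext fun y => by simp [hA, heq]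
  have main : ∀ (h : Fin m → Y) (y : Y), dIter (List.ofFn fun j => a j (h j)) ψ y = 0 := by
    intro h y
    obtain ⟨z, rfl⟩ := hA_surj y
    have hsteps : (List.ofFn fun j => a j (h j)) = (List.ofFn fun j => Pi.single j (h j)).map A :=
      by simp [List.map_ofFn, Function.comp_def, hA_single]
    rw [hsteps, ← Function.comp_apply (f := dIter _ ψ), ← dIter_comp_addMonoidHom, hψA,
      dIter_ofFn_single_sum_eq_zero r hr h, Pi.zero_apply]
  refine ⟨main, fun y h => ?_⟩
  choose x hx using fun j => ha j h
  simpa [hx, List.ofFn_const, dIter_replicate] using main x y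
end

section
/- On the real line, a function ψ : ℝ → ℂ is a polynomial in the finite-difference sense (i.e. Δ_h^{n+1} ψ ≡ 0 for all h ∈ ℝ) and continuous if and only if ψ is an ordinary polynomial function of degree at most n. -/
open Polynomial Finset
open fwdDiff

section Newton

variable {M G : Type*} [AddCommMonoid M] [AddCommGroup G] (h : M)

lemma fwdDiff_iter_sub (f g : M → G) (n : ℕ) :
    Δ_[h] ^[n] (f - g) = Δ_[h] ^[n] f - Δ_[h] ^[n] g := by
  simpa only [fwdDiff_aux.coe_fwdDiffₗ_pow] using map_sub (fwdDiff_aux.fwdDiffₗ M G h ^ n) f g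

lemma fwdDiff_iter_comp_addMonoidHom {M' : Type*} [AddCommMonoid M'] (φ : M →+ M') (f : M' → G)
    (n : ℕ) : Δ_[h] ^[n] (f ∘ φ) = Δ_[φ h] ^[n] f ∘ φ := by
  funext y
  simp [fwdDiff_iter_eq_sum_shift, map_add, map_nsmul]

lemma fwdDiff_iter_eq_zero_of_le {f : M → G} {n k : ℕ} (hf : Δ_[h] ^[n] f = 0) (hk : n ≤ k) :
    Δ_[h] ^[k] f = 0 := by
  obtain ⟨j, rfl⟩ := Nat.exists_eq_add_of_le hk
  rw [add_comm, Function.iterate_add_apply, hf]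
  exact Function.iterate_fixed (fwdDiff_const h 0) j

lemma shift_eq_sum_range_fwdDiff_iter_of_eq_zero {f : M → G} {n : ℕ} (hf : Δ_[h] ^[n + 1] f = 0)
    (m : ℕ) (y : M) :
    f (y + m • h) = ∑ k ∈ range (n + 1), m.choose k • Δ_[h] ^[k] f y := by
  have hvanish : ∀ k, m < k ∨ n < k → m.choose k • Δ_[h] ^[k] f y = 0 := by
    rintro k (hmk | hnk)
    · rw [Nat.choose_eq_zero_of_lt hmk, zero_smul]
    · rw [fwdDiff_iter_eq_zero_of_le h hf hnk, Pi.zero_apply, smul_zero]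
  rw [shift_eq_sum_fwdDiff_iter h f m y,
    sum_subset (range_subset_range.2 (by omega : m + 1 ≤ m + n + 1)),
    ← sum_subset (range_subset_range.2 (by omega : n + 1 ≤ m + n + 1))]
  all_goals
    intro k _ hk
    exact hvanish k (by simp only [mem_range] at hk; omega)

end Newton

theorem Polynomial.fwdDiff_iter_eval_eq_zero_of_natDegree_lt {R : Type*} [CommRing R]
    {P : R[X]} {n : ℕ} (hP : P.natDegree < n) (h : R) : Δ_[h] ^[n] P.eval = 0 := by
  funext y
  -- `P (y + k • h)` is the value at `k` of `P.comp (h X + y)`, whose step-`1` differences vanish.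
  have hdeg : (P.comp (C h * X + C y)).natDegree < n :=
    natDegree_comp_le.trans_lt <|
      (Nat.mul_le_mul_left _ natDegree_linear_le).trans_lt (by rwa [mul_one])
  have key := congrFun (fwdDiff_iter_eq_zero_of_degree_lt hdeg) 0
  rw [fwdDiff_iter_eq_sum_shift] at key ⊢
  simpa [eval_comp, add_comm, mul_comm h] using key

section CharZero

variable {M K : Type*} [AddCommMonoid M] [Field K] [CharZero K]

lemma exists_natDegree_le_forall_apply_add_nsmul_eq_eval {f : M → K} {h : M} {n : ℕ}
    (hf : Δ_[h] ^[n + 1] f = 0) (y : M) :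
    ∃ F : K[X], F.natDegree ≤ n ∧ ∀ m : ℕ, f (y + m • h) = F.eval (m : K) := by
  -- Newton's formula, with `m.choose k = (descPochhammer K k).eval m / k!`.
  refine ⟨∑ k ∈ range (n + 1), C (Δ_[h] ^[k] f y / k.factorial) * descPochhammer K k, ?_,
    fun m => ?_⟩
  · refine natDegree_sum_le_of_forall_le _ _ fun k hk => (natDegree_C_mul_le _ _).trans ?_
    rw [descPochhammer_natDegree]
    exact Nat.lt_succ_iff.1 (mem_range.1 hk)
  · rw [shift_eq_sum_range_fwdDiff_iter_of_eq_zero h hf, eval_finsetSum]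
    refine sum_congr rfl fun k _ => ?_
    rw [eval_mul, eval_C, descPochhammer_eval_eq_descFactorial,
      Nat.descFactorial_eq_factorial_mul_choose, nsmul_eq_mul]
    have : (k.factorial : K) ≠ 0 := Nat.cast_ne_zero.2 k.factorial_ne_zero
    push_cast
    field_simp

lemma apply_add_nsmul_eq_zero_of_card_lt {f : M → K} {h : M} {n : ℕ}
    (hf : Δ_[h] ^[n + 1] f = 0) {y : M} {s : Finset ℕ} (hs : n < #s)
    (hzero : ∀ m ∈ s, f (y + m • h) = 0) (m : ℕ) : f (y + m • h) = 0 := by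
  obtain ⟨F, hdeg, hF⟩ := exists_natDegree_le_forall_apply_add_nsmul_eq_eval hf y
  have hF0 : F = 0 :=
    eq_zero_of_natDegree_lt_card_of_eval_eq_zero F (f := fun i : s => ((i : ℕ) : K))
      (Nat.cast_injective.comp Subtype.val_injective) (fun i => hF i ▸ hzero i i.2)
      (by simpa using hdeg.trans_lt hs)
  rw [hF, hF0, eval_zero]

end CharZero

section Real

variable {K : Type*} [Field K] [CharZero K] {φ : ℝ → K} {n : ℕ}

lemma apply_natCast_eq_zero (hφ : ∀ h : ℝ, Δ_[h] ^[n + 1] φ = 0) (hnodes : ∀ i ≤ n, φ i = 0)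
    (m : ℕ) : φ m = 0 := by
  simpa using apply_add_nsmul_eq_zero_of_card_lt (hφ 1) (y := 0) (s := range (n + 1))
    (by simp) (fun i hi => by simpa using hnodes i (Nat.lt_succ_iff.1 (mem_range.1 hi))) m

lemma apply_neg_natCast_eq_zero (hφ : ∀ h : ℝ, Δ_[h] ^[n + 1] φ = 0)
    (hnodes : ∀ i ≤ n, φ i = 0) (k : ℕ) : φ (-k) = 0 := by
  have hs : n < #((range (n + 1)).image (k + ·)) := by
    rw [card_image_of_injective _ (add_right_injective k), card_range]
    exact n.lt_succ_self
  simpa using apply_add_nsmul_eq_zero_of_card_lt (hφ 1) (y := -k) hs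
    (by simp only [mem_image, mem_range]; rintro _ ⟨i, hi, rfl⟩; simpa using hnodes i (by omega)) 0

lemma apply_intCast_eq_zero (hφ : ∀ h : ℝ, Δ_[h] ^[n + 1] φ = 0) (hnodes : ∀ i ≤ n, φ i = 0)
    (z : ℤ) : φ z = 0 := by
  obtain ⟨k, rfl | rfl⟩ := Int.eq_nat_or_neg z
  · exact_mod_cast apply_natCast_eq_zero hφ hnodes k
  · exact_mod_cast apply_neg_natCast_eq_zero hφ hnodes k

lemma apply_natCast_div_eq_zero (hφ : ∀ h : ℝ, Δ_[h] ^[n + 1] φ = 0)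
    (hint : ∀ z : ℤ, φ z = 0) (m b : ℕ) : φ (m / b) = 0 := by
  rcases Nat.eq_zero_or_pos b with rfl | hb
  · simpa using hint 0
  have hs : n < #((range (n + 1)).image (· * b)) := by
    rw [card_image_of_injective _ (mul_left_injective₀ hb.ne'), card_range]
    exact n.lt_succ_self
  have hb' : (b : ℝ) ≠ 0 := by positivity
  simpa [div_eq_mul_inv] using apply_add_nsmul_eq_zero_of_card_lt (hφ (b : ℝ)⁻¹) (y := 0) hs
    (by simp only [mem_image, mem_range]; rintro _ ⟨i, -, rfl⟩; simpa [hb'] using hint i) m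

lemma apply_ratCast_eq_zero (hφ : ∀ h : ℝ, Δ_[h] ^[n + 1] φ = 0) (hnodes : ∀ i ≤ n, φ i = 0)
    (r : ℚ) : φ r = 0 := by
  have hint := apply_intCast_eq_zero hφ hnodes
  obtain ⟨m, hm | hm⟩ := Int.eq_nat_or_neg r.num
  · simpa [Rat.cast_def, hm] using apply_natCast_div_eq_zero hφ hint m r.den
  · have hneg : ∀ h : ℝ, Δ_[h] ^[n + 1] (φ ∘ negAddMonoidHom) = 0 := fun h => by
      rw [fwdDiff_iter_comp_addMonoidHom, hφ]; rfl
    simpa [Rat.cast_def, hm, neg_div] using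
      apply_natCast_div_eq_zero hneg (fun z => by simpa using hint (-z)) m r.den

lemma eq_zero_of_continuous_of_fwdDiff_iter_eq_zero [TopologicalSpace K] [T2Space K]
    (hc : Continuous φ) (hφ : ∀ h : ℝ, Δ_[h] ^[n + 1] φ = 0) (hnodes : ∀ i ≤ n, φ i = 0) :
    φ = 0 :=
  hc.ext_on Rat.denseRange_cast continuous_const <| by
    rintro _ ⟨r, rfl⟩; exact apply_ratCast_eq_zero hφ hnodes r

end Real

lemma exists_fin_coeffs_iff_exists_natDegree_le {α R : Type*} [CommSemiring R] (n : ℕ)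
    (v f : α → R) :
    (∃ c : Fin (n + 1) → R, ∀ a, f a = ∑ i : Fin (n + 1), c i * v a ^ (i : ℕ)) ↔
      ∃ P : R[X], P.natDegree ≤ n ∧ ∀ a, f a = P.eval (v a) := by
  constructor
  · rintro ⟨c, hc⟩
    refine ⟨∑ i : Fin (n + 1), C (c i) * X ^ (i : ℕ), ?_, fun a => by simp [hc, eval_finsetSum]⟩
    exact natDegree_sum_le_of_forall_le _ _ fun i _ =>
      (natDegree_C_mul_X_pow_le _ _).trans (Nat.lt_succ_iff.1 i.isLt)
  · rintro ⟨P, hP, hf⟩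
    refine ⟨fun i => P.coeff i, fun a => ?_⟩
    rw [hf, eval_eq_sum_range' (Nat.lt_succ_of_le hP), Fin.sum_univ_eq_sum_range
      (fun i => P.coeff i * v a ^ i)]

lemma fwdDiff_iter_eval_ofReal_eq_zero {P : ℂ[X]} {n : ℕ} (hP : P.natDegree ≤ n) (h : ℝ) :
    Δ_[h] ^[n + 1] (fun y : ℝ => P.eval (y : ℂ)) = 0 := by
  have := fwdDiff_iter_comp_addMonoidHom h Complex.ofRealHom.toAddMonoidHom P.eval (n + 1)
  rwa [fwdDiff_iter_eval_eq_zero_of_natDegree_lt (Nat.lt_succ_of_le hP)] at this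

lemma exists_natDegree_le_of_continuous_of_fwdDiff_iter_eq_zero {ψ : ℝ → ℂ} {n : ℕ}
    (hc : Continuous ψ) (hψ : ∀ h : ℝ, Δ_[h] ^[n + 1] ψ = 0) :
    ∃ P : ℂ[X], P.natDegree ≤ n ∧ ∀ y : ℝ, ψ y = P.eval (y : ℂ) := by
  have hinj : Set.InjOn (Nat.cast : ℕ → ℂ) (range (n + 1)) := Nat.cast_injective.injOn
  set Q := Lagrange.interpolate (range (n + 1)) (Nat.cast : ℕ → ℂ) (fun i => ψ i)
  have hQ : Q.natDegree ≤ n :=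
    natDegree_le_iff_degree_le.2 (by simpa [Q] using Lagrange.degree_interpolate_le _ hinj)
  have hdiff : ψ - (fun y : ℝ => Q.eval (y : ℂ)) = 0 := by
    refine eq_zero_of_continuous_of_fwdDiff_iter_eq_zero (n := n)
      (hc.sub (Q.continuous.comp Complex.continuous_ofReal)) (fun h => ?_) (fun i hi => ?_)
    · rw [fwdDiff_iter_sub, hψ, fwdDiff_iter_eval_ofReal_eq_zero hQ, sub_zero]
    · have := Lagrange.eval_interpolate_at_node (s := range (n + 1)) (fun i => ψ i) hinj
        (mem_range.2 (Nat.lt_succ_of_le hi))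
      simp only [Pi.sub_apply, Complex.ofReal_natCast, Q, this, sub_self]
  exact ⟨Q, hQ, fun y => sub_eq_zero.1 (congrFun hdiff y)⟩

/-- a continuous `ψ : ℝ → ℂ` is a polynomial in the
finite-difference sense (`Δ_h^{n+1} ψ ≡ 0` for all `h`) if and only if it is
an ordinary polynomial function of degree at most `n`. -/
theorem stmt3 (n : ℕ) (ψ : ℝ → ℂ) :
    (Continuous ψ ∧ ∀ (y h : ℝ), (dOp h)^[n + 1] ψ y = 0) ↔
      ∃ c : Fin (n + 1) → ℂ, ∀ y : ℝ, ψ y = ∑ i : Fin (n + 1), c i * (y : ℂ) ^ (i : ℕ) := by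
  have hdOp : ∀ h : ℝ, dOp h = fwdDiff h := fun _ => rfl
  simp only [hdOp, exists_fin_coeffs_iff_exists_natDegree_le n Complex.ofReal ψ]
  constructor
  · rintro ⟨hc, hψ⟩
    exact exists_natDegree_le_of_continuous_of_fwdDiff_iter_eq_zero hc
      fun h => funext fun y => hψ y h
  · rintro ⟨P, hP, hψ⟩
    obtain rfl : ψ = fun y : ℝ => P.eval (y : ℂ) := funext hψ
    exact ⟨P.continuous.comp Complex.continuous_ofReal,
      fun y h => congrFun (fwdDiff_iter_eval_ofReal_eq_zero hP h) y⟩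
end

section
/- Let ψ₁, …, ψₙ : ℝ → ℂ be continuous functions and let α_{ji} (j = 1,…,m, i = 1,…,n) be nonzero real numbers such that for every i ≠ l the vectors (α_{1i},…,α_{mi}) and (α_{1l},…,α_{ml}) are not proportional. If Σ_{i=1}^n ψᵢ(α_{1i}y₁ + ⋯ + α_{mi}yₘ) = Σ_{j=1}^m sⱼ(y₁,…,y_{j-1},y_{j+1},…,yₘ) for all y₁,…,yₘ ∈ ℝ and some functions sⱼ : ℝ^{m-1} → ℂ, then each ψᵢ is an ordinary polynomial. -/
/-!
Fix `i` and a step `h`. Apply to both sides of the functional equation the composite of the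
forward differences along the increments `w_j = (h / α_{ji}) e_j` (a period of `s_j`) and, for
each `l ≠ i`, an increment `v_l` with `⟨α_l, v_l⟩ = 0` and `⟨α_i, v_l⟩ = h` (it exists by
non-proportionality). The right-hand side and every `ψ_l` with `l ≠ i` are annihilated, while
`ψ_i` only sees steps `h`, so `Δ_h^{m+n} ψ_i = 0` for every `h`. A continuous function with this
property is a polynomial (Fréchet).
-/

open Finset Polynomial Function fwdDiff Nat

section fwdDiffList

variable {V W G : Type*} [AddCommMonoid V] [AddCommMonoid W] [AddCommGroup G]

def fwdDiffList (L : List V) (F : V → G) : V → G := L.foldr fwdDiff F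

@[simp] lemma fwdDiffList_nil (F : V → G) : fwdDiffList [] F = F := rfl

@[simp] lemma fwdDiffList_cons (v : V) (L : List V) (F : V → G) :
    fwdDiffList (v :: L) F = Δ_[v] (fwdDiffList L F) := rfl

lemma fwdDiffList_finsetSum {ι : Type*} (L : List V) (s : Finset ι) (F : ι → V → G) :
    fwdDiffList L (∑ i ∈ s, F i) = ∑ i ∈ s, fwdDiffList L (F i) := by
  induction L with
  | nil => rfl
  | cons v L ih => simp [ih]

lemma fwdDiffList_comp (ℓ : V →+ W) (L : List V) (g : W → G) :
    fwdDiffList L (g ∘ ℓ) = fwdDiffList (L.map ℓ) g ∘ ℓ := by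
  induction L with
  | nil => rfl
  | cons v L ih =>
      funext y
      simp [ih, fwdDiff]

lemma fwdDiffList_replicate (h : V) (k : ℕ) (F : V → G) :
    fwdDiffList (List.replicate k h) F = (fwdDiff h)^[k] F := by
  induction k with
  | zero => rfl
  | succ k ih => rw [List.replicate_succ, fwdDiffList_cons, ih, iterate_succ_apply']

lemma Function.Periodic.fwdDiffList {F : V → G} {v : V} (hF : Periodic F v) (L : List V) :
    Periodic (fwdDiffList L F) v := by
  induction L with
  | nil => exact hF
  | cons w L ih =>
      intro y
      simp only [fwdDiffList_cons, fwdDiff, add_right_comm y v w, ih (y + w), ih y]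

lemma fwdDiffList_eq_zero_of_mem {F : V → G} {v : V} {L : List V} (hv : v ∈ L)
    (hF : Periodic F v) : fwdDiffList L F = 0 := by
  induction L with
  | nil => cases hv
  | cons w L ih =>
      rcases List.mem_cons.1 hv with rfl | hv
      · funext y
        simp [fwdDiff, (hF.fwdDiffList L) y]
      · rw [fwdDiffList_cons, ih hv]
        exact fwdDiff_const w (0 : G)

theorem iterate_fwdDiff_eq_zero_of_sum_comp_eq_sum {ι κ : Type*} [Fintype ι] [Fintype κ]
    (ℓ : ι → V →+ W) (g : ι → W → G) (s : κ → V → G)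
    (heq : ∀ y, ∑ i, g i (ℓ i y) = ∑ k, s k y) (i : ι) (h : W) (L : List V)
    (hL : ∀ v ∈ L, ℓ i v = h) (hper : ∀ k, ∃ v ∈ L, Periodic (s k) v)
    (hker : ∀ i', i' ≠ i → ∃ v ∈ L, ℓ i' v = 0) (hsurj : Surjective (ℓ i)) :
    (fwdDiff h)^[L.length] (g i) = 0 := by
  classical
  have hfun : ∑ i', g i' ∘ ℓ i' = ∑ k, s k := funext fun y => by simpa using heq y
  have hdiff := congrArg (fwdDiffList L) hfun
  rw [fwdDiffList_finsetSum, fwdDiffList_finsetSum] at hdiff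
  have hright : ∀ k, fwdDiffList L (s k) = 0 := fun k => by
    obtain ⟨v, hv, hsv⟩ := hper k
    exact fwdDiffList_eq_zero_of_mem hv hsv
  have hothers : ∀ i', i' ≠ i → fwdDiffList L (g i' ∘ ℓ i') = 0 := fun i' hi' => by
    obtain ⟨v, hv, hℓv⟩ := hker i' hi'
    rw [fwdDiffList_comp, fwdDiffList_eq_zero_of_mem (List.mem_map.2 ⟨v, hv, hℓv⟩)
      (fun y => by rw [add_zero])]
    rfl
  have hmap : L.map (ℓ i) = List.replicate L.length h := by
    simpa [List.eq_replicate_iff] using hL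
  rw [Finset.sum_eq_single i (fun i' _ hi' => hothers i' hi') (by simp),
    Finset.sum_eq_zero (fun k _ => hright k), fwdDiffList_comp, hmap,
    fwdDiffList_replicate] at hdiff
  funext x
  obtain ⟨y, rfl⟩ := hsurj x
  exact congrFun hdiff y

end fwdDiffList

lemma exists_dotProduct_eq_zero_and_eq {ι : Type*} [Fintype ι] [DecidableEq ι]
    {a b : ι → ℝ} (ha : a ≠ 0) (hab : ¬ ∃ c : ℝ, ∀ j, b j = c * a j) (t : ℝ) :
    ∃ v : ι → ℝ, b ⬝ᵥ v = 0 ∧ a ⬝ᵥ v = t := by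
  obtain ⟨j₀, hj₀⟩ : ∃ j, a j ≠ 0 := Function.ne_iff.1 ha
  obtain ⟨j₁, hj₁⟩ : ∃ j₁, b j₁ ≠ b j₀ / a j₀ * a j₁ := by
    by_contra! hcon
    exact hab ⟨_, hcon⟩
  -- the 2 × 2 minor of the rows `a`, `b` in the columns `j₀`, `j₁` is invertible
  have hd : b j₀ * a j₁ - b j₁ * a j₀ ≠ 0 := by
    intro hd
    apply hj₁
    rw [div_mul_eq_mul_div, eq_div_iff hj₀]
    linarith
  refine ⟨Pi.single j₀ (-b j₁ * t / (b j₀ * a j₁ - b j₁ * a j₀)) +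
    Pi.single j₁ (b j₀ * t / (b j₀ * a j₁ - b j₁ * a j₀)), ?_, ?_⟩ <;>
  · simp only [dotProduct_add, dotProduct_single]
    rw [mul_div_assoc', mul_div_assoc', ← add_div, div_eq_iff hd]
    ring

section Frechet

lemma iterate_fwdDiff_eq_zero_of_le {M G : Type*} [AddCommMonoid M] [AddCommGroup G]
    {f : M → G} {h : M} {N j : ℕ} (hN : (fwdDiff h)^[N] f = 0) (hj : N ≤ j) :
    (fwdDiff h)^[j] f = 0 := by
  obtain ⟨r, rfl⟩ := Nat.exists_eq_add_of_le hj
  rw [add_comm, iterate_add_apply, hN]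
  clear hj
  induction r with
  | zero => rfl
  | succ r ih =>
      rw [iterate_succ_apply', ih]
      exact fwdDiff_const h (0 : G)

lemma shift_eq_sum_range_fwdDiff_iter {M G : Type*} [AddCommMonoid M] [AddCommGroup G]
    {f : M → G} {h : M} {N : ℕ} (hN : (fwdDiff h)^[N] f = 0) (x₀ : M) (k : ℕ) :
    f (x₀ + k • h) = ∑ j ∈ range N, k.choose j • (fwdDiff h)^[j] f x₀ := by
  have hk : ∑ j ∈ range (k + 1), k.choose j • (fwdDiff h)^[j] f x₀ =
      ∑ j ∈ range (k + 1 + N), k.choose j • (fwdDiff h)^[j] f x₀ :=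
    sum_subset (range_subset_range.2 (by omega)) fun j _ hj => by
      rw [Nat.choose_eq_zero_of_lt (by simpa using hj), zero_smul]
  have hN' : ∑ j ∈ range N, k.choose j • (fwdDiff h)^[j] f x₀ =
      ∑ j ∈ range (k + 1 + N), k.choose j • (fwdDiff h)^[j] f x₀ :=
    sum_subset (range_subset_range.2 (by omega)) fun j _ hj => by
      rw [iterate_fwdDiff_eq_zero_of_le hN (by simpa using hj), Pi.zero_apply, smul_zero]
  rw [shift_eq_sum_fwdDiff_iter h f k x₀, hk, hN']

/-- The Newton interpolation polynomial of degree `< N` of `f` on the grid `x₀ + h ℕ`. -/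
noncomputable def newtonPoly (f : ℝ → ℂ) (N : ℕ) (x₀ h : ℝ) : ℂ[X] :=
  ∑ j ∈ range N, C ((fwdDiff h)^[j] f x₀ / j !) *
    (descPochhammer ℂ j).comp (C ((h : ℂ)⁻¹) * (X - C (x₀ : ℂ)))

variable {f : ℝ → ℂ} {N : ℕ}

lemma eval_newtonPoly {h : ℝ} (hh : h ≠ 0) (x₀ : ℝ) (k : ℕ) :
    (newtonPoly f N x₀ h).eval ((x₀ + k * h : ℝ) : ℂ) =
      ∑ j ∈ range N, k.choose j • (fwdDiff h)^[j] f x₀ := by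
  have hk : (C ((h : ℂ)⁻¹) * (X - C (x₀ : ℂ))).eval ((x₀ + k * h : ℝ) : ℂ) = (k : ℂ) := by
    have : (h : ℂ) ≠ 0 := Complex.ofReal_ne_zero.2 hh
    simp only [eval_mul, eval_C, eval_sub, eval_X]
    push_cast
    field_simp
    ring
  rw [newtonPoly, eval_finsetSum]
  refine sum_congr rfl fun j _ => ?_
  have hj : (j ! : ℂ) ≠ 0 := Nat.cast_ne_zero.2 j.factorial_ne_zero
  rw [eval_mul, eval_C, eval_comp, hk, descPochhammer_eval_eq_descFactorial,
    Nat.descFactorial_eq_factorial_mul_choose, nsmul_eq_mul]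
  push_cast
  field_simp

lemma apply_eq_eval_newtonPoly {h : ℝ} (hN : (fwdDiff h)^[N] f = 0) (hh : h ≠ 0)
    (x₀ : ℝ) (k : ℕ) : f (x₀ + k * h) = (newtonPoly f N x₀ h).eval ((x₀ + k * h : ℝ) : ℂ) := by
  rw [eval_newtonPoly hh, ← shift_eq_sum_range_fwdDiff_iter hN, nsmul_eq_mul]

lemma newtonPoly_eq_newtonPoly_zero_one (hN : ∀ h, (fwdDiff h)^[N] f = 0) (M b : ℕ)
    (hb : b ≠ 0) : newtonPoly f N (-M) (b : ℝ)⁻¹ = newtonPoly f N 0 1 := by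
  refine eq_of_infinite_eval_eq _ _ (Set.infinite_of_injective_forall_mem
    (f := fun n : ℕ => (n : ℂ)) Nat.cast_injective fun n => ?_)
  have hgrid : -(M : ℝ) + ((n + M) * b : ℕ) * (b : ℝ)⁻¹ = n := by
    have : (b : ℝ) ≠ 0 := Nat.cast_ne_zero.2 hb
    push_cast
    field_simp
    ring
  have h₁ := apply_eq_eval_newtonPoly (hN _) (inv_ne_zero (Nat.cast_ne_zero.2 hb)) (-M)
    ((n + M) * b)
  have h₂ := apply_eq_eval_newtonPoly (f := f) (hN 1) one_ne_zero 0 n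
  rw [hgrid] at h₁
  simp only [zero_add, mul_one] at h₂
  simp only [Set.mem_ofPred_eq, ← Complex.ofReal_natCast, ← h₁, ← h₂]

/-- On every grid `-M + ℕ / b`, `f` agrees with a Newton polynomial; these polynomials all
coincide, and the grids cover the dense set `ℚ`. -/
theorem exists_polynomial_of_iterate_fwdDiff_eq_zero (hf : Continuous f)
    (hN : ∀ h, (fwdDiff h)^[N] f = 0) : ∃ p : ℂ[X], ∀ y : ℝ, f y = p.eval ↑y := by
  refine ⟨newtonPoly f N 0 1, congrFun (Continuous.ext_on Rat.denseRange_cast hf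
    ((newtonPoly f N 0 1).continuous.comp Complex.continuous_ofReal) ?_)⟩
  rintro _ ⟨q, rfl⟩
  have hden : (1 : ℤ) ≤ q.den := by exact_mod_cast q.den_pos
  have habs : -q.num ≤ q.num.natAbs := by omega
  obtain ⟨k, hk⟩ : ∃ k : ℕ, (k : ℤ) = q.num + (q.num.natAbs : ℤ) * q.den :=
    ⟨_, Int.toNat_of_nonneg (by nlinarith)⟩
  have hq : (q : ℝ) = -(q.num.natAbs : ℝ) + k * (q.den : ℝ)⁻¹ := by
    have hk' : (k : ℝ) = q.num + (q.num.natAbs : ℝ) * q.den := by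
      rw [← Int.cast_natCast k, hk]
      push_cast [Nat.cast_natAbs]
      rfl
    have : (q.den : ℝ) ≠ 0 := Nat.cast_ne_zero.2 q.den_nz
    rw [hk', Rat.cast_def]
    field_simp
    ring
  rw [hq, apply_eq_eval_newtonPoly (hN _) (inv_ne_zero (Nat.cast_ne_zero.2 q.den_nz)),
    newtonPoly_eq_newtonPoly_zero_one hN _ _ q.den_nz]

end Frechet

theorem stmt4_general (m n : ℕ) (hm : 1 ≤ m)
    (ψ : Fin n → ℝ → ℂ) (hψ : ∀ i, Continuous (ψ i))
    (α : Fin m → Fin n → ℝ) (hα : ∀ j i, α j i ≠ 0)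
    (hprop : ∀ i l : Fin n, i ≠ l → ¬ ∃ c : ℝ, ∀ j : Fin m, α j l = c * α j i)
    (s : Fin m → (Fin m → ℝ) → ℂ)
    (hs : ∀ (j : Fin m) (y y' : Fin m → ℝ), (∀ k, k ≠ j → y k = y' k) → s j y = s j y')
    (heq : ∀ y : Fin m → ℝ,
      ∑ i, ψ i (∑ j, α j i * y j) = ∑ j, s j y) :
    ∀ i, ∃ p : Polynomial ℂ, ∀ y : ℝ, ψ i y = Polynomial.eval (y : ℂ) p := by
  intro i
  let ℓ : Fin n → (Fin m → ℝ) →+ ℝ := fun l =>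
    AddMonoidHom.mk' (fun y => (fun j => α j l) ⬝ᵥ y) (dotProduct_add _)
  let w : ℝ → Fin m → Fin m → ℝ := fun h j => Pi.single j (h / α j i)
  have hw : ∀ h j, ℓ i (w h j) = h := fun h j =>
    (dotProduct_single (fun k => α k i) _ j).trans (mul_div_cancel₀ _ (hα j i))
  have hv : ∀ h (l : Fin n), ∃ v, ℓ i v = h ∧ (l ≠ i → ℓ l v = 0) := fun h l => by
    by_cases hl : l = i
    · exact ⟨w h ⟨0, hm⟩, hw h _, fun hne => absurd hl hne⟩
    · obtain ⟨v, hlv, hiv⟩ := exists_dotProduct_eq_zero_and_eq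
        (a := fun j => α j i) (fun ha => hα ⟨0, hm⟩ i (congrFun ha _)) (hprop i l (Ne.symm hl)) h
      exact ⟨v, hiv, fun _ => hlv⟩
  choose v hvi hvl using hv
  refine exists_polynomial_of_iterate_fwdDiff_eq_zero (N := m + n) (hψ i) fun h => ?_
  have key := iterate_fwdDiff_eq_zero_of_sum_comp_eq_sum ℓ ψ s heq i h
    (List.ofFn (w h) ++ List.ofFn (v h)) ?_ ?_ ?_ ?_
  · simpa using key
  · simp only [List.mem_append, List.mem_ofFn]
    rintro _ (⟨j, rfl⟩ | ⟨l, rfl⟩)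
    exacts [hw h j, hvi h l]
  · exact fun j => ⟨w h j, by simp, fun y => hs j _ _ fun k hk => by simp [w, hk]⟩
  · exact fun l hl => ⟨v h l, by simp, hvl h l hl⟩
  · exact fun x => ⟨w x ⟨0, hm⟩, hw x _⟩

/-- real-line case of Lemma 2: if continuous functions
`ψ₁, …, ψₙ : ℝ → ℂ` satisfy
`∑ᵢ ψᵢ(α_{1i}y₁ + ⋯ + α_{mi}yₘ) = ∑ⱼ sⱼ(y₁,…,ŷⱼ,…,yₘ)` with nonzero,
pairwise non-proportional coefficient vectors, then each `ψᵢ` is an ordinary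
polynomial. -/
theorem stmt4 (m n : ℕ) (hm : 1 ≤ m) (hn : 1 ≤ n)
    (ψ : Fin n → ℝ → ℂ) (hψ : ∀ i, Continuous (ψ i))
    (α : Fin m → Fin n → ℝ) (hα : ∀ j i, α j i ≠ 0)
    (hprop : ∀ i l : Fin n, i ≠ l → ¬ ∃ c : ℝ, ∀ j : Fin m, α j l = c * α j i)
    (s : Fin m → (Fin m → ℝ) → ℂ)
    (hs : ∀ (j : Fin m) (y y' : Fin m → ℝ), (∀ k, k ≠ j → y k = y' k) → s j y = s j y')
    (heq : ∀ y : Fin m → ℝ,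
      ∑ i, ψ i (∑ j, α j i * y j) = ∑ j, s j y) :
    ∀ i, ∃ p : Polynomial ℂ, ∀ y : ℝ, ψ i y = Polynomial.eval (y : ℂ) p :=
  stmt4_general m n hm ψ hψ α hα hprop s hs heq
end

section
/- Let X = ℝ (or any LCA group), and for topological automorphisms α_{ji} of X (j=1,…,m; i=1,…,n) put Gᵢ = {(α_{1i}x,…,α_{mi}x) : x ∈ X}. Then each Gᵢ is a closed subgroup of X^m, and for fixed i ≠ l the condition Gᵢ ∩ G_l = {0} holds if and only if ⋂_{p,k=1}^m Ker(α_{ki}^{-1}α_{kl} − α_{pi}^{-1}α_{pl}) = {0}. -/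
/-! The closedness of `Gᵢ` holds because `v ↦ α_{j₀ i}⁻¹ (v j₀)` is a continuous left inverse of
`x ↦ (α_{ji} x)_j`, and the range of a continuous map with a continuous left inverse into a
Hausdorff space is closed. For the intersection, `Gᵢ ∩ G_l` is the image under the injective
map `x ↦ (α_{jl} x)_j` of the set of `x` for which all `α_{ki}⁻¹ α_{kl} x` coincide, and that
set is exactly the intersection of kernels. -/

open Set Function

theorem isClosed_range_pi_of_leftInverse {ι X Y : Type*} [TopologicalSpace X]
    [TopologicalSpace Y] [T2Space Y] (φ : ι → X → Y) (hφ : ∀ j, Continuous (φ j)) (j₀ : ι)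
    (ψ : Y → X) (hψ : Continuous ψ) (h : LeftInverse ψ (φ j₀)) :
    IsClosed (range fun x j => φ j x) :=
  LeftInverse.isClosed_range (f := fun v : ι → Y => ψ (v j₀)) h (by fun_prop) (continuous_pi hφ)

section RangeInter

variable {ι X Y : Type*} [Nonempty ι] [AddGroup X] [AddGroup Y] (β γ : ι → X ≃+ Y)

theorem pi_apply_mem_range_iff (x : X) :
    (fun k => γ k x) ∈ range (fun y k => β k y) ↔
      ∀ p k, (β k).symm (γ k x) = (β p).symm (γ p x) := by
  constructor
  · rintro ⟨y, hy⟩ p k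
    simp only [← congrFun hy, AddEquiv.symm_apply_apply]
  · intro h
    obtain ⟨p⟩ := ‹Nonempty ι›
    refine ⟨(β p).symm (γ p x), funext fun k => ?_⟩
    simp only [← h p k, AddEquiv.apply_symm_apply]

theorem range_pi_inter_range_pi_eq_zero_iff :
    (range fun x k => β k x) ∩ (range fun x k => γ k x) = {0} ↔
      (⋂ p, ⋂ k, {x : X | (β k).symm (γ k x) - (β p).symm (γ p x) = 0}) = {0} := by
  obtain ⟨j₀⟩ := ‹Nonempty ι›
  have hinj : Injective fun x k => γ k x :=
    fun x y hxy => (γ j₀).injective (congrFun hxy j₀)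
  have hpre : (fun x k => γ k x) ⁻¹' range (fun y k => β k y) =
      ⋂ p, ⋂ k, {x : X | (β k).symm (γ k x) - (β p).symm (γ p x) = 0} := by
    ext x
    simp only [mem_preimage, pi_apply_mem_range_iff, mem_iInter, mem_ofPred_eq, sub_eq_zero]
  have hzero : ({0} : Set (ι → Y)) = (fun x k => γ k x) '' {0} := by
    simp only [image_singleton, map_zero]
    rfl
  rw [inter_comm, ← image_preimage_eq_range_inter, hpre, hzero,
    (image_injective.mpr hinj).eq_iff]

end RangeInter

theorem stmt13_general {X : Type*} [AddCommGroup X] [TopologicalSpace X]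
    [T2Space X]
    (m n : ℕ) (hm : 1 ≤ m) (α : Fin m → Fin n → X ≃+ X)
    (hαc : ∀ j i, Continuous (α j i)) (hαc' : ∀ j i, Continuous (α j i).symm) :
    (∀ i : Fin n, IsClosed (Set.range fun x : X => fun j : Fin m => α j i x)) ∧
    (∀ i l : Fin n, i ≠ l →
      ((Set.range fun x : X => fun j : Fin m => α j i x) ∩
        (Set.range fun x : X => fun j : Fin m => α j l x) = {0} ↔
      (⋂ p : Fin m, ⋂ k : Fin m,
        {x : X | (α k i).symm (α k l x) - (α p i).symm (α p l x) = 0}) = {0})) := by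
  let j₀ : Fin m := ⟨0, hm⟩
  have : Nonempty (Fin m) := ⟨j₀⟩
  refine ⟨fun i => ?_, fun i l _ => range_pi_inter_range_pi_eq_zero_iff _ _⟩
  exact isClosed_range_pi_of_leftInverse (fun j => α j i) (fun j => hαc j i) j₀
    (α j₀ i).symm (hαc' j₀ i) (α j₀ i).symm_apply_apply

/-- for topological automorphisms `α_{ji}` of a locally compact
abelian group `X`, the subgroups `Gᵢ = {(α_{1i}x,…,α_{mi}x) : x ∈ X}` are
closed in `X^m`, and for `i ≠ l` the condition `Gᵢ ∩ G_l = {0}` is equivalent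
to `⋂_{p,k} Ker (α_{ki}⁻¹ α_{kl} − α_{pi}⁻¹ α_{pl}) = {0}`. -/
theorem stmt13 {X : Type*} [AddCommGroup X] [TopologicalSpace X] [IsTopologicalAddGroup X]
    [LocallyCompactSpace X] [T2Space X]
    (m n : ℕ) (hm : 1 ≤ m) (α : Fin m → Fin n → X ≃+ X)
    (hαc : ∀ j i, Continuous (α j i)) (hαc' : ∀ j i, Continuous (α j i).symm) :
    (∀ i : Fin n, IsClosed (Set.range fun x : X => fun j : Fin m => α j i x)) ∧
    (∀ i l : Fin n, i ≠ l →
      ((Set.range fun x : X => fun j : Fin m => α j i x) ∩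
        (Set.range fun x : X => fun j : Fin m => α j l x) = {0} ↔
      (⋂ p : Fin m, ⋂ k : Fin m,
        {x : X | (α k i).symm (α k l x) - (α p i).symm (α p l x) = 0}) = {0})) :=
  stmt13_general m n hm α hαc hαc'
end

section
/- Let ψ₁, …, ψₙ : ℝ → ℂ be continuous, let α_{ji} be nonzero reals with the vectors (α_{1i},…,α_{mi}) pairwise non-proportional, let p : ℝ^m → ℂ be an ordinary polynomial, and suppose Σ_{i=1}^n ψᵢ(α_{1i}y₁+⋯+α_{mi}yₘ) = Σ_{j=1}^m sⱼ(y₁,…,y_{j-1},y_{j+1},…,yₘ) + p(y₁,…,yₘ) for all yⱼ ∈ ℝ. Then each ψᵢ is an ordinary polynomial. -/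
/-!
Fix `i` and write `L l y = ∑ j, α j l * y j`. Since `L i` and `L l` are not proportional for
`l ≠ i`, there is a direction `w l` with `L i (w l) = 1` and `L l (w l) = 0`. Taking iterated
differences of the functional equation along the directions `h • w l`, along the coordinate
directions `Pi.single j (h / α j i)`, and `deg p + 1` more times along `h • w i` annihilates
every `ψ l` with `l ≠ i`, every `s j` and `p`, while each of these directions shifts the
argument of `ψ i` by exactly `h`. Hence `Δ_[h] ^[N] (ψ i) = 0` for every `h`, with `N`
independent of `h`. By Newton's forward-difference formula `ψ i` then coincides with a
polynomial on every arithmetic progression; these polynomials agree since the progressions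
share infinitely many points, and continuity extends the identity from `ℚ` to `ℝ`.
-/

open fwdDiff Polynomial

section IterFwdDiff

variable {G M : Type*} [AddCommMonoid G] [AddCommGroup M]

def iterFwdDiff (l : List G) (f : G → M) : G → M := l.foldr fwdDiff f

@[simp] lemma iterFwdDiff_cons (h : G) (l : List G) (f : G → M) :
    iterFwdDiff (h :: l) f = Δ_[h] (iterFwdDiff l f) := rfl

lemma iterFwdDiff_append (l₁ l₂ : List G) (f : G → M) :
    iterFwdDiff (l₁ ++ l₂) f = iterFwdDiff l₁ (iterFwdDiff l₂ f) :=
  List.foldr_append ..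

lemma iterFwdDiff_replicate (N : ℕ) (h : G) (f : G → M) :
    iterFwdDiff (List.replicate N h) f = Δ_[h] ^[N] f := by
  induction N with
  | zero => rfl
  | succ N ih => rw [List.replicate_succ, iterFwdDiff_cons, ih, Function.iterate_succ_apply']

lemma fwdDiff_comm (h k : G) (f : G → M) : Δ_[h] (Δ_[k] f) = Δ_[k] (Δ_[h] f) := by
  funext y
  simp only [fwdDiff, add_right_comm y h k]
  abel

lemma iterFwdDiff_perm {l l' : List G} (hl : l.Perm l') (f : G → M) :
    iterFwdDiff l f = iterFwdDiff l' f :=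
  hl.foldr_eq (lcomm := ⟨fwdDiff_comm⟩) f

@[simp] lemma fwdDiff_zero (h : G) : Δ_[h] (0 : G → M) = 0 :=
  fwdDiff_const h 0

@[simp] lemma iterFwdDiff_zero (l : List G) : iterFwdDiff l (0 : G → M) = 0 := by
  induction l with
  | nil => rfl
  | cons h l ih => simp [ih]

lemma iterFwdDiff_add (l : List G) (f g : G → M) :
    iterFwdDiff l (f + g) = iterFwdDiff l f + iterFwdDiff l g := by
  induction l with
  | nil => rfl
  | cons h l ih => simp [ih]

lemma iterFwdDiff_finsetSum {ι : Type*} (l : List G) (s : Finset ι) (f : ι → G → M) :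
    iterFwdDiff l (∑ i ∈ s, f i) = ∑ i ∈ s, iterFwdDiff l (f i) := by
  induction l with
  | nil => rfl
  | cons h l ih => simp [ih]

lemma iterFwdDiff_eq_zero_of_sublist {l₀ l : List G} (hl : l₀.Sublist l) {f : G → M}
    (hf : iterFwdDiff l₀ f = 0) : iterFwdDiff l f = 0 := by
  obtain ⟨r, hr⟩ := hl.exists_perm_append
  rw [iterFwdDiff_perm (hr.trans List.perm_append_comm), iterFwdDiff_append, hf,
    iterFwdDiff_zero]

lemma iterFwdDiff_eq_zero_of_mem {h : G} {l : List G} (hh : h ∈ l) {f : G → M}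
    (hf : Δ_[h] f = 0) : iterFwdDiff l f = 0 :=
  iterFwdDiff_eq_zero_of_sublist (List.singleton_sublist.mpr hh) hf

lemma iterFwdDiff_comp {H : Type*} [AddCommMonoid H] (L : G →+ H) (l : List G) (f : H → M) :
    iterFwdDiff l (f ∘ L) = iterFwdDiff (l.map L) f ∘ L := by
  induction l with
  | nil => rfl
  | cons h l ih =>
    funext y
    simp [ih, fwdDiff]

theorem fwdDiff_iter_eq_zero_of_sum_comp_eq {ι H : Type*} [Fintype ι] [AddCommMonoid H]
    {ψ : ι → H → M} {L : ι → G →+ H} {F : G → M} (hF : ∀ y, ∑ l, ψ l (L l y) = F y)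
    {i : ι} (hi : Function.Surjective (L i)) {h : H} {dirs : List G}
    (hdirs : ∀ v ∈ dirs, L i v = h) (hker : ∀ l ≠ i, ∃ v ∈ dirs, L l v = 0)
    (hFdirs : iterFwdDiff dirs F = 0) : Δ_[h] ^[dirs.length] (ψ i) = 0 := by
  have hmap : dirs.map (L i) = List.replicate dirs.length h :=
    List.eq_replicate_iff.mpr ⟨List.length_map _, by simpa using hdirs⟩
  have hother : ∀ l ≠ i, iterFwdDiff (dirs.map (L l)) (ψ l) = 0 := fun l hl => by
    obtain ⟨v, hv, hLv⟩ := hker l hl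
    refine iterFwdDiff_eq_zero_of_mem (h := 0) ?_ (by funext; simp [fwdDiff])
    exact hLv ▸ List.mem_map_of_mem hv
  have hsum : F = ∑ l, ψ l ∘ L l := funext fun y => by simp [← hF]
  rw [hsum, iterFwdDiff_finsetSum, Finset.sum_eq_single i (fun l _ hl => by
    rw [iterFwdDiff_comp, hother l hl]; rfl) (by simp), iterFwdDiff_comp, hmap,
    iterFwdDiff_replicate] at hFdirs
  funext x
  obtain ⟨y, rfl⟩ := hi x
  exact congrFun hFdirs y

end IterFwdDiff

open Finset in
theorem exists_eval_nat_eq_of_fwdDiff_iter_eq_zero {M K : Type*} [AddCommMonoid M] [Field K]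
    [CharZero K] {f : M → K} {h : M} {N : ℕ} (hN : Δ_[h] ^[N] f = 0) (y : M) :
    ∃ P : K[X], ∀ n : ℕ, f (y + n • h) = P.eval (n : K) := by
  refine ⟨∑ k ∈ range N, C (Δ_[h] ^[k] f y / k.factorial) * descPochhammer K k, fun n => ?_⟩
  have hvanish : ∀ k ≥ N, Δ_[h] ^[k] f = 0 := fun k hk => by
    rw [← Nat.sub_add_cancel hk, Function.iterate_add_apply, hN]
    exact Function.iterate_fixed (fwdDiff_const h 0) _
  rw [shift_eq_sum_fwdDiff_iter h f n y, eval_finsetSum]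
  calc ∑ k ∈ range (n + 1), n.choose k • Δ_[h] ^[k] f y
      = ∑ k ∈ range (n + 1 + N), n.choose k • Δ_[h] ^[k] f y := by
        refine sum_subset (range_subset_range.mpr (by omega)) fun k hk hkn => ?_
        rw [Nat.choose_eq_zero_of_lt (by simp at hk hkn; omega), zero_smul]
    _ = ∑ k ∈ range N, n.choose k • Δ_[h] ^[k] f y := by
        refine (sum_subset (range_subset_range.mpr (by omega)) fun k hk hkN => ?_).symm
        rw [hvanish k (by simpa using hkN), Pi.zero_apply, smul_zero]
    _ = _ := by
        refine sum_congr rfl fun k _ => ?_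
        have hk : (k.factorial : K) ≠ 0 := Nat.cast_ne_zero.mpr k.factorial_ne_zero
        rw [eval_C_mul, descPochhammer_eval_eq_descFactorial,
          Nat.descFactorial_eq_factorial_mul_choose, Nat.cast_mul, nsmul_eq_mul]
        field_simp

theorem exists_polynomial_of_fwdDiff_iter_eq_zero {𝕜 : Type*} [RCLike 𝕜] {f : ℝ → 𝕜}
    (hf : Continuous f) {N : ℕ} (hN : ∀ h : ℝ, Δ_[h] ^[N] f = 0) :
    ∃ P : 𝕜[X], ∀ x : ℝ, f x = P.eval (x : 𝕜) := by
  obtain ⟨P, hP⟩ := exists_eval_nat_eq_of_fwdDiff_iter_eq_zero (hN 1) 0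
  simp only [zero_add, nsmul_eq_mul, mul_one] at hP
  -- the grid `(ℕ - M) / k` contains `ℕ`, where Newton's polynomial for it must agree with `P`
  have hgrid : ∀ n M k : ℕ, 0 < k → f ((n - M) / k) = P.eval (((n - M) / k : ℝ) : 𝕜) := by
    intro n M k hk
    have hkR : (k : ℝ) ≠ 0 := Nat.cast_ne_zero.mpr hk.ne'
    have hk𝕜 : (k : 𝕜) ≠ 0 := Nat.cast_ne_zero.mpr hk.ne'
    obtain ⟨Q, hQ⟩ := exists_eval_nat_eq_of_fwdDiff_iter_eq_zero (hN (1 / k)) (-(M / k))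
    simp only [nsmul_eq_mul] at hQ
    have hQP : Q = P.comp (C (k : 𝕜)⁻¹ * (X - C (M : 𝕜))) := by
      refine eq_of_infinite_eval_eq _ _ (Set.infinite_of_injective_forall_mem
        (f := fun t : ℕ => ((k * t + M : ℕ) : 𝕜)) (fun a b hab => ?_) fun t => ?_)
      · simpa [hk𝕜] using hab
      · have hx : -(M / k) + ((k * t + M : ℕ) : ℝ) * (1 / k) = t := by
          push_cast; field_simp; ring
        have hy : (k : 𝕜)⁻¹ * (((k * t + M : ℕ) : 𝕜) - M) = t := by
          push_cast; field_simp; ring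
        rw [Set.mem_ofPred_eq, ← hQ, eval_comp, eval_mul, eval_C, eval_sub, eval_X, eval_C,
          hx, hy, hP]
    calc f ((n - M) / k) = Q.eval (n : 𝕜) := by rw [← hQ n]; congr 1; field_simp; ring
      _ = _ := by
        simp only [hQP, eval_comp, eval_mul, eval_C, eval_sub, eval_X]
        congr 1; push_cast; ring
  refine ⟨P, congrFun (Continuous.ext_on Rat.denseRange_cast hf
    (P.continuous.comp RCLike.continuous_ofReal) ?_)⟩
  rintro _ ⟨q, rfl⟩
  have hnum : (q.num.toNat : ℝ) - ((-q.num).toNat : ℝ) = q.num := by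
    exact_mod_cast Int.toNat_sub_toNat_neg q.num
  simp only [Rat.cast_def, ← hnum]
  exact hgrid _ _ _ q.den_pos

namespace MvPolynomial

variable {σ R A : Type*} [CommSemiring R] [CommRing A] [Algebra R A]

lemma natDegree_aeval_linear_le (p : MvPolynomial σ A) (a b : σ → A) :
    (aeval (fun j => Polynomial.C (a j) * Polynomial.X + Polynomial.C (b j)) p).natDegree
      ≤ p.totalDegree := by
  conv_lhs => rw [p.as_sum]
  rw [map_sum]
  refine Polynomial.natDegree_sum_le_of_forall_le _ _ fun μ hμ => ?_
  rw [aeval_monomial, Polynomial.algebraMap_eq, Finsupp.prod]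
  refine (natDegree_C_mul_le _ _).trans <| (natDegree_prod_le _ _).trans <|
    le_trans ?_ (le_totalDegree hμ)
  refine Finset.sum_le_sum fun j _ => natDegree_pow_le.trans ?_
  simpa using Nat.mul_le_mul_left (μ j) (natDegree_linear_le (a := a j) (b := b j))

lemma eval_aeval_linear (p : MvPolynomial σ A) (a b : σ → A) (t : A) :
    (aeval (fun j => Polynomial.C (a j) * Polynomial.X + Polynomial.C (b j)) p).eval t
      = eval (fun j => a j * t + b j) p := by
  induction p using MvPolynomial.induction_on <;> simp_all

theorem fwdDiff_iter_eval_eq_zero (p : MvPolynomial σ A) (u : σ → R) {N : ℕ}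
    (hN : p.totalDegree < N) :
    Δ_[u] ^[N] (fun y : σ → R => eval (fun j => algebraMap R A (y j)) p) = 0 := by
  funext y
  set q := aeval (fun j => Polynomial.C (algebraMap R A (u j)) * Polynomial.X
    + Polynomial.C (algebraMap R A (y j))) p
  have hq : Δ_[(1 : A)] ^[N] q.eval 0 = 0 := by
    rw [Polynomial.fwdDiff_iter_eq_zero_of_degree_lt
      ((natDegree_aeval_linear_le p _ _).trans_lt hN)]
    rfl
  rw [fwdDiff_iter_eq_sum_shift, Pi.zero_apply, ← hq, fwdDiff_iter_eq_sum_shift]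
  refine Finset.sum_congr rfl fun k _ => ?_
  rw [eval_aeval_linear]
  congr 3
  funext j
  simp only [Pi.add_apply, Pi.smul_apply, map_add, map_nsmul, zero_add, nsmul_one]
  rw [nsmul_eq_mul, mul_comm, add_comm]

end MvPolynomial

open LinearMap in
lemma exists_apply_eq_one_and_apply_eq_zero {K V : Type*} [Field K] [AddCommGroup V] [Module K V]
    {f g : V →ₗ[K] K} (hfg : ∀ c : K, f ≠ c • g) : ∃ v, f v = 1 ∧ g v = 0 := by
  have hker : ¬ ker g ≤ ker f := fun hle => by
    have := mem_span_of_iInf_ker_le_ker (L := fun _ : Unit => g) (K := f) (by simpa using hle)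
    rw [Set.range_const, Submodule.mem_span_singleton] at this
    obtain ⟨c, hc⟩ := this
    exact hfg c hc.symm
  obtain ⟨v, hgv, hfv⟩ := SetLike.not_le_iff_exists.mp hker
  exact ⟨(f v)⁻¹ • v, by simpa using inv_mul_cancel₀ hfv, by simp [mem_ker.mp hgv]⟩

section ColForm

variable {ι κ R : Type*} [Fintype ι] [CommSemiring R]

def colForm (α : ι → κ → R) (l : κ) : (ι → R) →ₗ[R] R where
  toFun y := ∑ j, α j l * y j
  map_add' y z := by simp [mul_add, Finset.sum_add_distrib]
  map_smul' c y := by simp [Finset.mul_sum, mul_left_comm]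

@[simp] lemma colForm_single [DecidableEq ι] (α : ι → κ → R) (l : κ) (j : ι) (t : R) :
    colForm α l (Pi.single j t) = α j l * t := by
  simp [colForm, Pi.single_apply]

end ColForm

lemma fwdDiff_single_eq_zero {ι R M : Type*} [DecidableEq ι] [AddCommMonoid R] [AddCommGroup M]
    {f : (ι → R) → M} {j : ι} (hf : ∀ y y', (∀ k, k ≠ j → y k = y' k) → f y = f y') (t : R) :
    Δ_[Pi.single j t] f = 0 :=
  funext fun y => sub_eq_zero.mpr <| hf _ _ fun k hk => by simp [hk]

theorem iterFwdDiff_sum_add_eval_eq_zero {σ R A : Type*} [Fintype σ] [DecidableEq σ]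
    [CommSemiring R] [CommRing A] [Algebra R A] {s : σ → (σ → R) → A}
    (hs : ∀ j y y', (∀ k, k ≠ j → y k = y' k) → s j y = s j y') (p : MvPolynomial σ A)
    {dirs : List (σ → R)} (hsingle : ∀ j, ∃ t, Pi.single j t ∈ dirs)
    (hrep : ∃ u, (List.replicate (p.totalDegree + 1) u).Sublist dirs) :
    iterFwdDiff dirs ((∑ j, s j) + fun y => MvPolynomial.eval (fun j => algebraMap R A (y j)) p)
      = 0 := by
  rw [iterFwdDiff_add, iterFwdDiff_finsetSum, Finset.sum_eq_zero fun j _ => ?_, zero_add]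
  · obtain ⟨u, hu⟩ := hrep
    refine iterFwdDiff_eq_zero_of_sublist hu ?_
    rw [iterFwdDiff_replicate]
    exact MvPolynomial.fwdDiff_iter_eval_eq_zero p u (lt_add_one _)
  · obtain ⟨t, ht⟩ := hsingle j
    exact iterFwdDiff_eq_zero_of_mem ht (fwdDiff_single_eq_zero (hs j) t)

lemma exists_colForm_eq_one_and_eq_zero {m n : ℕ} (hm : 1 ≤ m) {α : Fin m → Fin n → ℝ}
    (hα : ∀ j i, α j i ≠ 0)
    (hprop : ∀ i l : Fin n, i ≠ l → ¬ ∃ c : ℝ, ∀ j : Fin m, α j l = c * α j i) (i l : Fin n) :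
    ∃ v, colForm α i v = 1 ∧ (l ≠ i → colForm α l v = 0) := by
  by_cases hli : l = i
  · exact ⟨Pi.single ⟨0, hm⟩ (α ⟨0, hm⟩ i)⁻¹, by simp [hα], fun h => (h hli).elim⟩
  · obtain ⟨v, hv1, hv0⟩ := exists_apply_eq_one_and_apply_eq_zero (f := colForm α i)
      (g := colForm α l) fun c hc => hprop l i hli
        ⟨c, fun j => by simpa using LinearMap.congr_fun hc (Pi.single j 1)⟩
    exact ⟨v, hv1, fun _ => hv0⟩

theorem stmt16_general (m n : ℕ) (hm : 1 ≤ m)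
    (ψ : Fin n → ℝ → ℂ) (hψ : ∀ i, Continuous (ψ i))
    (α : Fin m → Fin n → ℝ) (hα : ∀ j i, α j i ≠ 0)
    (hprop : ∀ i l : Fin n, i ≠ l → ¬ ∃ c : ℝ, ∀ j : Fin m, α j l = c * α j i)
    (s : Fin m → (Fin m → ℝ) → ℂ)
    (hs : ∀ (j : Fin m) (y y' : Fin m → ℝ), (∀ k, k ≠ j → y k = y' k) → s j y = s j y')
    (p : MvPolynomial (Fin m) ℂ)
    (heq : ∀ y : Fin m → ℝ,
      ∑ i, ψ i (∑ j, α j i * y j)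
        = (∑ j, s j y) + MvPolynomial.eval (fun j => (y j : ℂ)) p) :
    ∀ i, ∃ q : Polynomial ℂ, ∀ y : ℝ, ψ i y = Polynomial.eval (y : ℂ) q := by
  intro i
  choose w hw1 hw0 using exists_colForm_eq_one_and_eq_zero hm hα hprop i
  refine exists_polynomial_of_fwdDiff_iter_eq_zero (hψ i)
    (N := p.totalDegree + 1 + m + n) fun h => ?_
  let dirs := List.replicate (p.totalDegree + 1) (h • w i) ++
    List.ofFn (fun j => Pi.single j (h / α j i)) ++ List.ofFn (fun l => h • w l)
  have hlen : dirs.length = p.totalDegree + 1 + m + n := by simp [dirs, add_assoc]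
  rw [← hlen]
  refine fwdDiff_iter_eq_zero_of_sum_comp_eq (L := fun l => (colForm α l).toAddMonoidHom)
    (F := (∑ j, s j) + fun y => MvPolynomial.eval (fun j => algebraMap ℝ ℂ (y j)) p)
    (fun y => by simpa [colForm] using heq y) (fun x => ⟨x • w i, by simp [hw1]⟩) ?_ ?_ ?_
  · intro v hv
    simp only [dirs, List.mem_append, List.mem_replicate, List.mem_ofFn] at hv
    rcases hv with (⟨-, rfl⟩ | ⟨j, rfl⟩) | ⟨l, rfl⟩ <;> simp [hw1, mul_div_cancel₀, hα]
  · exact fun l hl => ⟨h • w l, by simp [dirs], by simp [hw0 l hl]⟩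
  · refine iterFwdDiff_sum_add_eval_eq_zero hs p (fun j => ⟨h / α j i, ?_⟩) ⟨h • w i, ?_⟩
    · simp [dirs]
    · exact List.sublist_append_left _ _ |>.trans (List.sublist_append_left _ _)

/-- real-line strengthening of Lemma 2 used for Theorem 4: the
functional equation with an extra ordinary polynomial `p(y₁,…,yₘ)` on the
right-hand side still forces each `ψᵢ` to be an ordinary polynomial. -/
theorem stmt16 (m n : ℕ) (hm : 1 ≤ m) (hn : 1 ≤ n)
    (ψ : Fin n → ℝ → ℂ) (hψ : ∀ i, Continuous (ψ i))
    (α : Fin m → Fin n → ℝ) (hα : ∀ j i, α j i ≠ 0)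
    (hprop : ∀ i l : Fin n, i ≠ l → ¬ ∃ c : ℝ, ∀ j : Fin m, α j l = c * α j i)
    (s : Fin m → (Fin m → ℝ) → ℂ)
    (hs : ∀ (j : Fin m) (y y' : Fin m → ℝ), (∀ k, k ≠ j → y k = y' k) → s j y = s j y')
    (p : MvPolynomial (Fin m) ℂ)
    (heq : ∀ y : Fin m → ℝ,
      ∑ i, ψ i (∑ j, α j i * y j)
        = (∑ j, s j y) + MvPolynomial.eval (fun j => (y j : ℂ)) p) :
    ∀ i, ∃ q : Polynomial ℂ, ∀ y : ℝ, ψ i y = Polynomial.eval (y : ℂ) q :=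
  stmt16_general m n hm ψ hψ α hα hprop s hs p heq
end
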